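/- For all integers n, k with n ≥ k ≥ 0 and every nonzero real λ, the new type degenerate Stirling number of the second kind satisfies {n,k}*_λ = ∑_{m=k}^{n} λ^{m-k} · {m,k} · {n,m}, where {m,k} and {n,m} denote the classical Stirling numbers of the second kind. -/

import Mathlib

open Finset

/-- The Stirling numbers of the second kind, defined by the recurrence
`{n+1, k+1} = (k+1)·{n, k+1} + {n, k}` with `{0,0} = 1`. -/
def stirling2 : ℕ → ℕ → ℕ
  | 0, 0 => 1
  | 0, _ + 1 => 0
  | _ + 1, 0 => 0
  | n + 1, k + 1 => (k + 1) * stirling2 n (k + 1) + stirling2 n k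

/-!
Expanding `(e^u - 1)^k` by the binomial theorem and using the alternating-sum formula
`∑ᵢ (-1)^(k-i) C(k,i) iⁿ = k! {n,k}` (the `k`-th forward difference of `xⁿ` at `0`) gives the
exponential generating function `(e^u - 1)^k / k! = ∑ₙ {n,k} uⁿ/n!`.
Substituting `u = λ(e^t - 1)` and expanding each `(e^t - 1)^m / m!` again gives a double
series in `m` and `n`; it converges absolutely, so it may be summed by columns, and the
coefficient of `tⁿ/n!` is `∑ₘ λ^(m-k) {m,k} {n,m}`. Uniqueness of power series coefficients
finishes the proof.
-/

open Nat in
theorem stirling2_eq_stirlingSecond : stirling2 = stirlingSecond := by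
  funext n k
  induction n generalizing k with
  | zero => cases k <;> rfl
  | succ n ih =>
    cases k with
    | zero => rfl
    | succ k => rw [stirling2, stirlingSecond_succ_succ, ih, ih]

namespace Nat

theorem mul_descFactorial_eq_add (x m : ℕ) :
    x * x.descFactorial m = x.descFactorial (m + 1) + m * x.descFactorial m := by
  rcases le_or_gt m x with h | h
  · rw [descFactorial_succ, ← add_mul, Nat.sub_add_cancel h]
  · simp [descFactorial_eq_zero_iff_lt.mpr h]

theorem pow_eq_sum_stirlingSecond_mul_descFactorial (n x : ℕ) :
    x ^ n = ∑ m ∈ range (n + 1), stirlingSecond n m * x.descFactorial m := by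
  induction n with
  | zero => simp
  | succ n ih =>
    have shift : ∑ m ∈ range (n + 1), m * stirlingSecond n m * x.descFactorial m =
        ∑ m ∈ range (n + 1), (m + 1) * stirlingSecond n (m + 1) * x.descFactorial (m + 1) := by
      rw [sum_range_succ', sum_range_succ, stirlingSecond_eq_zero_of_lt n.lt_succ_self]
      simp
    calc x ^ (n + 1) = ∑ m ∈ range (n + 1), stirlingSecond n m * (x * x.descFactorial m) := by
          rw [pow_succ', ih, mul_sum]; simp only [mul_left_comm]
      _ = ∑ m ∈ range (n + 1), stirlingSecond n m * x.descFactorial (m + 1) +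
            ∑ m ∈ range (n + 1), m * stirlingSecond n m * x.descFactorial m := by
          simp only [mul_descFactorial_eq_add, mul_add, sum_add_distrib, mul_left_comm, mul_assoc]
      _ = ∑ m ∈ range (n + 2), stirlingSecond (n + 1) m * x.descFactorial m := by
          rw [shift, ← sum_add_distrib, sum_range_succ' _ (n + 1)]
          simp only [stirlingSecond_succ_succ, stirlingSecond_succ_zero, zero_mul, add_zero]
          exact sum_congr rfl fun m _ ↦ by ring

theorem sum_alternating_choose_mul_pow (n k : ℕ) :
    ∑ i ∈ range (k + 1), (-1 : ℤ) ^ (k - i) * k.choose i * (i : ℤ) ^ n =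
      k ! * stirlingSecond n k := by
  have hpow : (fun x : ℕ ↦ (x : ℤ) ^ n) =
      ∑ m ∈ range (n + 1), (stirlingSecond n m * m ! : ℤ) • fun x : ℕ ↦ (x.choose m : ℤ) := by
    ext x
    rw [← Nat.cast_pow, pow_eq_sum_stirlingSecond_mul_descFactorial]
    simp [descFactorial_eq_factorial_mul_choose, mul_assoc]
  -- The left side is the `k`-th forward difference of `x ↦ xⁿ` at `0`.
  have := fwdDiff_iter_eq_sum_shift 1 (fun x : ℕ ↦ (x : ℤ) ^ n) k 0
  simp only [zero_add, smul_eq_mul, mul_one] at this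
  rw [← this, hpow, fwdDiff_iter_finsetSum]
  simp only [fwdDiff_iter_const_smul, Finset.sum_apply, Pi.smul_apply, fwdDiff_iter_choose_zero,
    smul_eq_mul, mul_ite, mul_one, mul_zero, sum_ite_eq, mem_range]
  split_ifs with h
  · ring
  · rw [stirlingSecond_eq_zero_of_lt (by omega)]; simp

end Nat

theorem hasFPowerSeriesAt_ofScalars_of_hasSum {c : ℕ → ℝ} {f : ℝ → ℝ} {ε : ℝ} (hε : 0 < ε)
    (h : ∀ t : ℝ, |t| < ε → HasSum (fun n ↦ c n * t ^ n) (f t)) :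
    HasFPowerSeriesAt f (.ofScalars ℝ c) 0 := by
  lift ε to NNReal using hε.le
  have hhalf : ((ε / 2 : NNReal) : ℝ) < ε := by push_cast; linarith
  refine ⟨((ε / 2 : NNReal) : ENNReal), ?_, by simpa using hε.ne', fun {y} hy ↦ ?_⟩
  · have := (h _ (by rwa [NNReal.abs_eq])).summable.tendsto_atTop_zero.norm
    simp only [norm_mul, norm_pow, Real.norm_eq_abs, NNReal.abs_eq, abs_zero] at this
    refine FormalMultilinearSeries.le_radius_of_tendsto _ (l := 0) ?_
    simpa only [FormalMultilinearSeries.ofScalars_norm, Real.norm_eq_abs] using this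
  · rw [Metric.mem_eball, edist_zero_right, enorm_eq_nnnorm, ENNReal.coe_lt_coe,
      ← NNReal.coe_lt_coe, coe_nnnorm, Real.norm_eq_abs] at hy
    simpa [FormalMultilinearSeries.ofScalars_apply_eq, mul_comm] using h y (hy.trans hhalf)

theorem eq_of_forall_hasSum_mul_pow {a b : ℕ → ℝ} {f : ℝ → ℝ} {ε : ℝ} (hε : 0 < ε)
    (ha : ∀ t : ℝ, |t| < ε → HasSum (fun n ↦ a n * t ^ n) (f t))
    (hb : ∀ t : ℝ, |t| < ε → HasSum (fun n ↦ b n * t ^ n) (f t)) : a = b :=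
  FormalMultilinearSeries.ofScalars_series_injective ℝ ℝ <|
    (hasFPowerSeriesAt_ofScalars_of_hasSum hε ha).eq_formalMultilinearSeries
      (hasFPowerSeriesAt_ofScalars_of_hasSum hε hb)

section GeneratingFunctions

open Nat Real

theorem hasSum_stirlingSecond_mul_pow_div_factorial (k : ℕ) (u : ℝ) :
    HasSum (fun n ↦ (stirlingSecond n k : ℝ) * u ^ n / n !) ((exp u - 1) ^ k / k !) := by
  have hexp (i : ℕ) : HasSum (fun n ↦ (i : ℝ) ^ n * (u ^ n / n !)) (exp (i * u)) := by
    simpa only [mul_pow, mul_div_assoc, exp_eq_exp_ℝ] using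
      NormedSpace.expSeries_div_hasSum_exp ((i : ℝ) * u)
  have hbinom :
      (exp u - 1) ^ k = ∑ i ∈ range (k + 1), (-1) ^ (k - i) * k.choose i * exp (i * u) := by
    rw [sub_eq_add_neg, add_pow]
    exact sum_congr rfl fun i _ ↦ by rw [← exp_nat_mul]; ring
  have hcoeff (n : ℕ) : ∑ i ∈ range (k + 1), (-1 : ℝ) ^ (k - i) * k.choose i * (i : ℝ) ^ n =
      k ! * stirlingSecond n k := by
    exact_mod_cast congrArg (Int.cast : ℤ → ℝ) (sum_alternating_choose_mul_pow n k)
  have hsum := hasSum_sum fun i (_ : i ∈ range (k + 1)) ↦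
    (hexp i).mul_left ((-1 : ℝ) ^ (k - i) * k.choose i)
  rw [← hbinom] at hsum
  refine (hsum.div_const (k ! : ℝ)).congr_fun fun n ↦ ?_
  calc (stirlingSecond n k : ℝ) * u ^ n / n !
        = k ! * stirlingSecond n k * (u ^ n / n !) / k ! := by field_simp
    _ = _ := by
        rw [← hcoeff, sum_mul]
        exact congrArg (· / _) (sum_congr rfl fun i _ ↦ by ring)

theorem hasSum_pow_sub_mul_stirlingSecond {lam : ℝ} (hlam : lam ≠ 0) (k : ℕ) (x : ℝ) :
    HasSum (fun m ↦ lam ^ (m - k) * stirlingSecond m k * x ^ m / m !)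
      (1 / k ! * ((1 / lam) * (exp (lam * x) - 1)) ^ k) := by
  have h := (hasSum_stirlingSecond_mul_pow_div_factorial k (lam * x)).mul_left (lam⁻¹ ^ k)
  rw [show lam⁻¹ ^ k * ((exp (lam * x) - 1) ^ k / k !) =
      1 / k ! * ((1 / lam) * (exp (lam * x) - 1)) ^ k by rw [mul_pow, one_div]; ring] at h
  refine h.congr_fun fun m ↦ ?_
  rcases le_or_gt k m with hkm | hmk
  · obtain ⟨j, rfl⟩ := Nat.exists_eq_add_of_le' hkm
    simp only [Nat.add_sub_cancel, mul_pow, pow_add, inv_pow]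
    field_simp
  · simp [stirlingSecond_eq_zero_of_lt hmk]

theorem hasSum_sum_Icc_pow_sub_mul_stirlingSecond {lam : ℝ} (hlam : lam ≠ 0) (k : ℕ)
    (t : ℝ) :
    HasSum (fun n ↦ (∑ m ∈ Icc k n, lam ^ (m - k) * stirlingSecond m k * stirlingSecond n m) /
        n ! * t ^ n)
      (1 / k ! * ((1 / lam) * (exp (lam * (exp t - 1)) - 1)) ^ k) := by
  let G (l s : ℝ) (p : ℕ × ℕ) : ℝ :=
    l ^ (p.1 - k) * stirlingSecond p.1 k * (stirlingSecond p.2 p.1 * s ^ p.2 / p.2 !)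
  have hrow (l s : ℝ) (m : ℕ) : HasSum (fun n ↦ G l s (m, n))
      (l ^ (m - k) * stirlingSecond m k * (exp s - 1) ^ m / m !) := by
    rw [mul_div_assoc]
    exact (hasSum_stirlingSecond_mul_pow_div_factorial m s).mul_left _
  -- Absolute summability: the same expansion at `|λ|` and `|t|` has nonnegative terms.
  have hsummable : Summable (G lam t) := by
    refine Summable.of_norm ?_
    have hnorm : (fun p ↦ ‖G lam t p‖) = G |lam| |t| := by
      ext p
      simp [G]
    rw [hnorm, summable_prod_of_nonneg fun p ↦ by positivity]
    refine ⟨fun m ↦ (hrow _ _ m).summable, ?_⟩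
    simp_rw [fun m ↦ (hrow |lam| |t| m).tsum_eq]
    exact (hasSum_pow_sub_mul_stirlingSecond (abs_ne_zero.mpr hlam) k _).summable
  have hG : HasSum (G lam t) (1 / k ! * ((1 / lam) * (exp (lam * (exp t - 1)) - 1)) ^ k) := by
    have := hsummable.hasSum
    rwa [(this.prod_fiberwise (hrow lam t)).unique
      (hasSum_pow_sub_mul_stirlingSecond hlam k _)] at this
  refine ((Equiv.prodComm ℕ ℕ).hasSum_iff.mpr hG).prod_fiberwise fun n ↦ ?_
  have hvanish : ∀ m ∉ Icc k n, G lam t (m, n) = 0 := fun m hm ↦ by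
    rcases not_and_or.mp (mem_Icc.not.mp hm) with hkm | hmn
    · simp [G, stirlingSecond_eq_zero_of_lt (not_le.mp hkm)]
    · simp [G, stirlingSecond_eq_zero_of_lt (not_le.mp hmn)]
  have hcol := hasSum_sum_of_ne_finset_zero (f := fun m ↦ G lam t (m, n))
    (L := .unconditional ℕ) hvanish
  show HasSum (fun m ↦ G lam t (m, n)) _
  convert hcol using 1
  rw [sum_div, sum_mul]
  exact sum_congr rfl fun m _ ↦ by simp only [G]; ring

end GeneratingFunctions

/-- **Theorem 3.1.** For a nonzero real `λ`, if `B n k = {n, k}*_λ` are the new type degenerate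
Stirling numbers of the second kind, defined by the power series expansion
`(1/k!)·((1/λ)(e^{λ(e^t - 1)} - 1))^k = ∑_{n=k}^∞ {n, k}*_λ · tⁿ/n!`, then for all
`n ≥ k ≥ 0` one has `{n, k}*_λ = ∑_{m=k}^n λ^{m-k} {m, k} {n, m}`. -/
theorem new_type_deg_stirling2_eq_sum (lam : ℝ) (hlam : lam ≠ 0) (B : ℕ → ℕ → ℝ)
    (hB : ∀ k : ℕ, ∃ ε > 0, ∀ t : ℝ, |t| < ε →
      HasSum (fun j : ℕ => B (j + k) k * t ^ (j + k) / (Nat.factorial (j + k) : ℝ))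
        ((1 / (Nat.factorial k : ℝ)) *
          ((1 / lam) * (Real.exp (lam * (Real.exp t - 1)) - 1)) ^ k))
    (n k : ℕ) (hkn : k ≤ n) :
    B n k = ∑ m ∈ Finset.Icc k n,
      lam ^ (m - k) * (stirling2 m k : ℝ) * (stirling2 n m : ℝ) := by
  obtain ⟨ε, hε, hBsum⟩ := hB k
  -- Padding the coefficients of `hB` with zeros below `k` makes it a power series in `t`.
  have hpadded (t : ℝ) (ht : |t| < ε) :
      HasSum (fun m ↦ (if k ≤ m then B m k / m.factorial else 0) * t ^ m)
        ((1 / k.factorial) * ((1 / lam) * (Real.exp (lam * (Real.exp t - 1)) - 1)) ^ k) := by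
    rw [← hasSum_nat_add_iff' k, sum_eq_zero fun i hi ↦ by simp [(mem_range.mp hi).not_ge]]
    simpa [div_mul_eq_mul_div] using hBsum t ht
  have hcoeff := congrFun (eq_of_forall_hasSum_mul_pow hε hpadded fun t _ ↦
    hasSum_sum_Icc_pow_sub_mul_stirlingSecond hlam k t) n
  rw [if_pos hkn, div_left_inj' (by positivity)] at hcoeff
  rw [hcoeff, stirling2_eq_stirlingSecond]
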